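/- Every f-harmonic function of polynomial growth on the Gaussian space (ℝ^n, Euclidean metric, e^{-|x|²/4}dx) is constant. -/

import Mathlib

open MeasureTheory Metric Filter Topology

/-- The Euclidean Laplacian `Δu(x) = ∑ᵢ ∂²u/∂xᵢ²`. -/
noncomputable def eLaplacian (n : ℕ) (u : EuclideanSpace ℝ (Fin n) → ℝ)
    (x : EuclideanSpace ℝ (Fin n)) : ℝ :=
  ∑ i : Fin n,
    fderiv ℝ (fun y => fderiv ℝ u y (EuclideanSpace.single i 1)) x (EuclideanSpace.single i 1)

namespace Stmt9Aux

variable {n : ℕ}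

lemma one_le_inf : (1 : WithTop ℕ∞) ≤ ((⊤:ℕ∞) : WithTop ℕ∞) := by exact_mod_cast le_top

lemma inf_add_one : ((⊤:ℕ∞) : WithTop ℕ∞) + 1 ≤ ((⊤:ℕ∞) : WithTop ℕ∞) := by norm_num

noncomputable def gw (n : ℕ) (x : EuclideanSpace ℝ (Fin n)) : ℝ := Real.exp (-‖x‖^2/4)

lemma gw_pos (x : EuclideanSpace ℝ (Fin n)) : 0 < gw n x := Real.exp_pos _

lemma gw_le_one (x : EuclideanSpace ℝ (Fin n)) : gw n x ≤ 1 := by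
  rw [gw]
  apply Real.exp_le_one_iff.mpr
  nlinarith [sq_nonneg ‖x‖]

lemma hasFDerivAt_gw (x : EuclideanSpace ℝ (Fin n)) :
    HasFDerivAt (gw n) ((-(gw n x)/2) • (innerSL ℝ x)) x := by
  have h1 : HasFDerivAt (fun y : EuclideanSpace ℝ (Fin n) => ‖y‖^2) (2 • (innerSL ℝ x)) x :=
    (hasStrictFDerivAt_norm_sq x).hasFDerivAt
  have h2 : HasFDerivAt (fun y : EuclideanSpace ℝ (Fin n) => -‖y‖^2/4)
      ((-(1:ℝ)/4) • (2 • (innerSL ℝ x))) x := by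
    have := h1.const_smul ((-1:ℝ)/4)
    refine this.congr_of_eventuallyEq (Filter.Eventually.of_forall fun y => ?_)
    simp only [Pi.smul_apply, smul_eq_mul]; ring
  have h3 := h2.exp
  refine h3.congr_fderiv ?_
  ext v
  simp [gw]
  ring

lemma contDiff_gw : ContDiff ℝ ((⊤:ℕ∞) : WithTop ℕ∞) (gw n) := by
  have : ContDiff ℝ ((⊤:ℕ∞) : WithTop ℕ∞) (fun x : EuclideanSpace ℝ (Fin n) => -‖x‖^2/4) :=
    (contDiff_norm_sq ℝ).neg.div_const 4
  exact Real.contDiff_exp.of_le le_top |>.comp this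

lemma sum_single_eq (x : EuclideanSpace ℝ (Fin n)) :
    ∑ i, x i • EuclideanSpace.single i (1:ℝ) = x := by
  ext j
  have := Finset.sum_apply (a := j) (g := fun i => x i • EuclideanSpace.single i (1:ℝ))
    (s := Finset.univ)
  simp only [PiLp.smul_apply] at *
  rw [WithLp.ofLp_sum, Finset.sum_apply]
  simp [EuclideanSpace.single_apply]

lemma clm_apply_eq_sum (L : EuclideanSpace ℝ (Fin n) →L[ℝ] ℝ) (v : EuclideanSpace ℝ (Fin n)) :
    L v = ∑ i, v i * L (EuclideanSpace.single i 1) := by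
  have h := map_sum L (fun i => v i • EuclideanSpace.single i (1:ℝ)) Finset.univ
  rw [sum_single_eq] at h
  rw [h]
  simp

lemma contDiff_du {u : EuclideanSpace ℝ (Fin n) → ℝ}
    (hsm : ContDiff ℝ ((⊤:ℕ∞) : WithTop ℕ∞) u) (v : EuclideanSpace ℝ (Fin n)) :
    ContDiff ℝ ((⊤:ℕ∞) : WithTop ℕ∞) (fun x => fderiv ℝ u x v) :=
  (hsm.fderiv_right inf_add_one).clm_apply contDiff_const

/-- pointwise divergence-free identity: `∑ᵢ ∂ᵢ (gw ∂ᵢ u) = gw (Δu - ½ x·∇u) = 0`. -/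
lemma div_free {u : EuclideanSpace ℝ (Fin n) → ℝ} (hsm : ContDiff ℝ ((⊤:ℕ∞) : WithTop ℕ∞) u)
    (hharm : ∀ x, eLaplacian n u x - (1 / 2) * fderiv ℝ u x x = 0)
    (x : EuclideanSpace ℝ (Fin n)) :
    ∑ i, fderiv ℝ (fun y => gw n y * fderiv ℝ u y (EuclideanSpace.single i 1)) x
      (EuclideanSpace.single i 1) = 0 := by
  have hderiv : ∀ i : Fin n,
      fderiv ℝ (fun y => gw n y * fderiv ℝ u y (EuclideanSpace.single i 1)) x
        (EuclideanSpace.single i 1)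
      = gw n x * (fderiv ℝ (fun y => fderiv ℝ u y (EuclideanSpace.single i 1)) x
            (EuclideanSpace.single i 1))
        + fderiv ℝ u x (EuclideanSpace.single i 1) * ((-(gw n x)/2) * x i) := by
    intro i
    have h2 : HasFDerivAt (fun y => fderiv ℝ u y (EuclideanSpace.single i (1:ℝ)))
        (fderiv ℝ (fun y => fderiv ℝ u y (EuclideanSpace.single i 1)) x) x :=
      (((contDiff_du hsm _).differentiable (by simp)) x).hasFDerivAt
    have h := (hasFDerivAt_gw x).fun_mul h2
    rw [h.fderiv]
    have hx : (inner ℝ x (EuclideanSpace.single i (1:ℝ)) : ℝ) = x i := by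
      simp [EuclideanSpace.inner_single_right]
    simp only [ContinuousLinearMap.add_apply, ContinuousLinearMap.smul_apply,
      ContinuousLinearMap.coe_smul', Pi.smul_apply, innerSL_apply_apply, smul_eq_mul, hx]
    try ring
  rw [Finset.sum_congr rfl (fun i _ => hderiv i)]
  rw [Finset.sum_add_distrib, ← Finset.mul_sum]
  have hsum : ∑ i, fderiv ℝ u x (EuclideanSpace.single i (1:ℝ)) * ((-(gw n x)/2) * x i)
      = (-(gw n x)/2) * fderiv ℝ u x x := by
    rw [clm_apply_eq_sum (fderiv ℝ u x) x, Finset.mul_sum]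
    congr 1; ext i; ring
  rw [hsum]
  have h := hharm x
  have e1 : (∑ i : Fin n, (fderiv ℝ (fun y => (fderiv ℝ u y) (EuclideanSpace.single i 1)) x)
      (EuclideanSpace.single i 1)) = eLaplacian n u x := rfl
  rw [e1]
  have e2 : gw n x * eLaplacian n u x + -gw n x/2 * fderiv ℝ u x x
      = gw n x * (eLaplacian n u x - 1/2 * fderiv ℝ u x x) := by ring
  rw [e2, h, mul_zero]

lemma hcs_du {φ : EuclideanSpace ℝ (Fin n) → ℝ} (hcs : HasCompactSupport φ)
    (v : EuclideanSpace ℝ (Fin n)) :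
    HasCompactSupport (fun x => fderiv ℝ φ x v) :=
  (hcs.fderiv ℝ).comp_left (g := fun L : EuclideanSpace ℝ (Fin n) →L[ℝ] ℝ => L v) rfl

/-- Integration by parts against a compactly supported test function. -/
lemma ibp {u : EuclideanSpace ℝ (Fin n) → ℝ} (hsm : ContDiff ℝ ((⊤:ℕ∞) : WithTop ℕ∞) u)
    (hdiv : ∀ x, ∑ i, fderiv ℝ (fun y => gw n y * fderiv ℝ u y (EuclideanSpace.single i 1)) x
      (EuclideanSpace.single i 1) = 0)
    {φ : EuclideanSpace ℝ (Fin n) → ℝ} (hφ : ContDiff ℝ ((⊤:ℕ∞) : WithTop ℕ∞) φ)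
    (hcs : HasCompactSupport φ) :
    ∫ x : EuclideanSpace ℝ (Fin n), ∑ i,
      fderiv ℝ φ x (EuclideanSpace.single i 1)
        * (gw n x * fderiv ℝ u x (EuclideanSpace.single i 1)) = 0 := by
  set e : Fin n → EuclideanSpace ℝ (Fin n) := fun i => EuclideanSpace.single i 1 with he
  have hgsm : ∀ i, ContDiff ℝ ((⊤:ℕ∞) : WithTop ℕ∞) (fun x => gw n x * fderiv ℝ u x (e i)) :=
    fun i => contDiff_gw.mul (contDiff_du hsm (e i))
  have hint : ∀ i : Fin n, Integrable (fun x => fderiv ℝ φ x (e i)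
      * (gw n x * fderiv ℝ u x (e i))) := by
    intro i
    apply Continuous.integrable_of_hasCompactSupport
    · exact ((contDiff_du hφ (e i)).continuous).mul (hgsm i).continuous
    · exact ((hcs_du hcs (e i)).mul_right)
  rw [integral_finset_sum _ (fun i _ => hint i)]
  have heach : ∀ i : Fin n, ∫ x : EuclideanSpace ℝ (Fin n),
      fderiv ℝ φ x (e i) * (gw n x * fderiv ℝ u x (e i))
      = - ∫ x : EuclideanSpace ℝ (Fin n),
          fderiv ℝ (fun y => gw n y * fderiv ℝ u y (e i)) x (e i) * φ x := by
    intro i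
    have h := integral_mul_fderiv_eq_neg_fderiv_mul_of_integrable
      (μ := (volume : Measure (EuclideanSpace ℝ (Fin n))))
      (f := fun x => gw n x * fderiv ℝ u x (e i)) (g := φ) (v := e i)
      ?_ ?_ ?_ (fun x _ => (hgsm i).differentiable (by simp) x) (fun x _ => hφ.differentiable (by simp) x)
    · calc ∫ x, fderiv ℝ φ x (e i) * (gw n x * fderiv ℝ u x (e i))
          = ∫ x, (gw n x * fderiv ℝ u x (e i)) * fderiv ℝ φ x (e i) := by
            congr 1; ext x; ring
        _ = - ∫ x, fderiv ℝ (fun y => gw n y * fderiv ℝ u y (e i)) x (e i) * φ x := h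
    · apply Continuous.integrable_of_hasCompactSupport
      · exact (contDiff_du (hgsm i) (e i)).continuous.mul hφ.continuous
      · exact hcs.mul_left
    · apply Continuous.integrable_of_hasCompactSupport
      · exact (hgsm i).continuous.mul (contDiff_du hφ (e i)).continuous
      · exact (hcs_du hcs (e i)).mul_left
    · apply Continuous.integrable_of_hasCompactSupport
      · exact (hgsm i).continuous.mul hφ.continuous
      · exact hcs.mul_left
  rw [Finset.sum_congr rfl (fun i _ => heach i)]
  have hintn : ∀ i : Fin n, Integrable (fun x =>
      fderiv ℝ (fun y => gw n y * fderiv ℝ u y (e i)) x (e i) * φ x) := by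
    intro i
    apply Continuous.integrable_of_hasCompactSupport
    · exact (contDiff_du (hgsm i) (e i)).continuous.mul hφ.continuous
    · exact hcs.mul_left
  rw [Finset.sum_neg_distrib, ← integral_finset_sum _ (fun i _ => hintn i)]
  have hz : (fun x : EuclideanSpace ℝ (Fin n) =>
      ∑ i, fderiv ℝ (fun y => gw n y * fderiv ℝ u y (e i)) x (e i) * φ x)
      = fun _ => (0:ℝ) := by
    funext x; rw [← Finset.sum_mul, hdiv x, zero_mul]
  rw [hz, integral_zero, neg_zero]

noncomputable def bump (n : ℕ) : ContDiffBump (0 : EuclideanSpace ℝ (Fin n)) :=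
  ⟨1, 2, one_pos, one_lt_two⟩

noncomputable def chi (n : ℕ) (R : ℝ) (x : EuclideanSpace ℝ (Fin n)) : ℝ := bump n (R⁻¹ • x)

lemma bump_smooth : ContDiff ℝ ((⊤:ℕ∞) : WithTop ℕ∞) (⇑(bump n)) :=
  ContDiffBump.contDiff (f := bump n) (n := (⊤ : ℕ∞))

lemma chi_smooth (R : ℝ) : ContDiff ℝ ((⊤:ℕ∞) : WithTop ℕ∞) (chi n R) :=
  bump_smooth.comp (contDiff_const_smul _)

lemma chi_nonneg (R : ℝ) (x : EuclideanSpace ℝ (Fin n)) : 0 ≤ chi n R x := (bump n).nonneg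

lemma chi_le_one (R : ℝ) (x : EuclideanSpace ℝ (Fin n)) : chi n R x ≤ 1 := (bump n).le_one

lemma chi_one {R : ℝ} (hR : 1 ≤ R) {x : EuclideanSpace ℝ (Fin n)} (hx : ‖x‖ ≤ R) :
    chi n R x = 1 := by
  apply (bump n).one_of_mem_closedBall
  simp only [mem_closedBall, dist_zero_right, norm_smul, norm_inv, Real.norm_eq_abs]
  have hR0 : (0:ℝ) < R := lt_of_lt_of_le one_pos hR
  rw [abs_of_pos hR0]
  rw [inv_mul_le_iff₀ hR0]
  simpa [bump] using hx

lemma chi_zero {R : ℝ} (hR : 1 ≤ R) {x : EuclideanSpace ℝ (Fin n)} (hx : 2*R ≤ ‖x‖) :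
    chi n R x = 0 := by
  apply (bump n).zero_of_le_dist
  simp only [dist_zero_right, norm_smul, norm_inv, Real.norm_eq_abs]
  have hR0 : (0:ℝ) < R := lt_of_lt_of_le one_pos hR
  rw [abs_of_pos hR0]
  rw [show ((bump n).rOut : ℝ) = 2 from rfl]
  rw [le_inv_mul_iff₀ hR0]
  linarith

lemma chi_cs {R : ℝ} (hR : 1 ≤ R) : HasCompactSupport (chi n R) := by
  apply HasCompactSupport.intro (isCompact_closedBall (0 : EuclideanSpace ℝ (Fin n)) (2*R))
  intro x hx
  simp only [mem_closedBall, dist_zero_right, not_le] at hx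
  exact chi_zero hR hx.le

lemma hasFDerivAt_chi {R : ℝ} (hR : 1 ≤ R) (x : EuclideanSpace ℝ (Fin n)) :
    HasFDerivAt (chi n R) (R⁻¹ • fderiv ℝ (⇑(bump n)) (R⁻¹ • x)) x := by
  have hinner : HasFDerivAt (fun y : EuclideanSpace ℝ (Fin n) => R⁻¹ • y)
      (R⁻¹ • ContinuousLinearMap.id ℝ (EuclideanSpace ℝ (Fin n))) x :=
    (hasFDerivAt_id x).const_smul R⁻¹
  have houter : HasFDerivAt (⇑(bump n)) (fderiv ℝ (⇑(bump n)) (R⁻¹ • x)) (R⁻¹ • x) :=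
    ((bump_smooth.differentiable (by simp)) _).hasFDerivAt
  have h := houter.comp x hinner
  refine h.congr_fderiv ?_
  ext v
  simp only [ContinuousLinearMap.coe_comp', Function.comp_apply,
    ContinuousLinearMap.coe_smul', Pi.smul_apply, ContinuousLinearMap.coe_id', id_eq,
    ContinuousLinearMap.map_smul]

lemma chi_deriv_zero_lt {R : ℝ} (hR : 1 ≤ R) {x : EuclideanSpace ℝ (Fin n)} (hx : ‖x‖ < R) :
    fderiv ℝ (chi n R) x = 0 := by
  have hev : chi n R =ᶠ[nhds x] (fun _ => (1:ℝ)) := by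
    have : Metric.ball (0 : EuclideanSpace ℝ (Fin n)) R ∈ nhds x := by
      apply (Metric.isOpen_ball).mem_nhds; simpa [mem_ball, dist_zero_right] using hx
    filter_upwards [this] with y hy
    exact chi_one hR (by rw [mem_ball, dist_zero_right] at hy; exact hy.le)
  rw [hev.fderiv_eq, fderiv_fun_const]
  rfl

lemma chi_deriv_zero_gt {R : ℝ} (hR : 1 ≤ R) {x : EuclideanSpace ℝ (Fin n)} (hx : 2*R < ‖x‖) :
    fderiv ℝ (chi n R) x = 0 := by
  have hev : chi n R =ᶠ[nhds x] (fun _ => (0:ℝ)) := by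
    have hopen : IsOpen {y : EuclideanSpace ℝ (Fin n) | 2*R < ‖y‖} :=
      isOpen_lt continuous_const continuous_norm
    have : {y : EuclideanSpace ℝ (Fin n) | 2*R < ‖y‖} ∈ nhds x := hopen.mem_nhds hx
    filter_upwards [this] with y hy
    exact chi_zero hR hy.le
  rw [hev.fderiv_eq, fderiv_fun_const]
  rfl

/-- Caccioppoli-type estimate. -/
lemma cacc {u : EuclideanSpace ℝ (Fin n) → ℝ} (hsm : ContDiff ℝ ((⊤:ℕ∞) : WithTop ℕ∞) u)
    (hdiv : ∀ x, ∑ i, fderiv ℝ (fun y => gw n y * fderiv ℝ u y (EuclideanSpace.single i 1)) x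
      (EuclideanSpace.single i 1) = 0)
    {C : ℝ} {m : ℕ} (hC0 : 0 ≤ C) (hpb : ∀ x, |u x| ≤ C * (1+‖x‖)^m)
    {K : ℝ} (hK0 : 0 ≤ K) (hK : ∀ y, ‖fderiv ℝ (⇑(bump n)) y‖ ≤ K)
    {r R : ℝ} (hR : 1 ≤ R) (hrR : r ≤ R) :
    ∫ x in ball (0 : EuclideanSpace ℝ (Fin n)) r,
        (∑ i, (fderiv ℝ u x (EuclideanSpace.single i 1))^2) * gw n x
      ≤ 2 * ((n:ℝ) * (2*(C*(1+2*R)^m)^2*K^2*Real.exp (-(R^2)/4)))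
        * (volume (closedBall (0 : EuclideanSpace ℝ (Fin n)) (2*R))).toReal := by
  have hR0 : (0:ℝ) < R := lt_of_lt_of_le one_pos hR
  set e : Fin n → EuclideanSpace ℝ (Fin n) := fun i => EuclideanSpace.single i 1 with he
  set χ : EuclideanSpace ℝ (Fin n) → ℝ := chi n R with hχdef
  set φ : EuclideanSpace ℝ (Fin n) → ℝ := fun x => u x * (χ x * χ x) with hφdef
  have hφsm : ContDiff ℝ ((⊤:ℕ∞) : WithTop ℕ∞) φ :=
    hsm.mul ((chi_smooth R).mul (chi_smooth R))
  have hφcs : HasCompactSupport φ := ((chi_cs hR).mul_right).mul_left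
  have hibp := ibp hsm hdiv hφsm hφcs
  -- derivative of φ
  have hdφ : ∀ (x : EuclideanSpace ℝ (Fin n)) (i : Fin n), fderiv ℝ φ x (e i)
      = (χ x * χ x) * fderiv ℝ u x (e i)
        + u x * (2 * χ x * fderiv ℝ χ x (e i)) := by
    intro x i
    have hu : HasFDerivAt u (fderiv ℝ u x) x := ((hsm.differentiable (by simp)) x).hasFDerivAt
    have hc : HasFDerivAt χ (fderiv ℝ χ x) x :=
      (((chi_smooth R).differentiable (by simp)) x).hasFDerivAt
    have h := hu.fun_mul (hc.fun_mul hc)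
    rw [hφdef, h.fderiv]
    simp only [ContinuousLinearMap.add_apply, ContinuousLinearMap.smul_apply, smul_eq_mul]
    ring
  -- P and Q
  set D : Fin n → EuclideanSpace ℝ (Fin n) → ℝ := fun i x => fderiv ℝ u x (e i) with hDdef
  set P : EuclideanSpace ℝ (Fin n) → ℝ := fun x => ∑ i, (1/2) * (χ x * D i x)^2 * gw n x with hPdef
  set Q : EuclideanSpace ℝ (Fin n) → ℝ := fun x => ∑ i, 2 * (u x * fderiv ℝ χ x (e i))^2 * gw n x with hQdef
  set G : EuclideanSpace ℝ (Fin n) → ℝ := fun x => ∑ i, fderiv ℝ φ x (e i) * (gw n x * D i x) with hGdef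
  have hPnonneg : ∀ x, 0 ≤ P x := by
    intro x; apply Finset.sum_nonneg; intro i _
    have := (gw_pos (n := n) x).le
    positivity
  have hPQ : ∀ x, P x ≤ G x + Q x := by
    intro x
    rw [hPdef, hQdef, hGdef]
    simp only
    rw [← Finset.sum_add_distrib]
    apply Finset.sum_le_sum
    intro i _
    rw [hdφ x i]
    have hg := (gw_pos (n := n) x).le
    nlinarith [mul_nonneg hg (sq_nonneg (χ x * D i x + 2 * u x * fderiv ℝ χ x (e i)))]
  -- continuity facts
  have hccont : Continuous χ := (chi_smooth R).continuous
  have hdχcont : ∀ i : Fin n, Continuous (fun x => fderiv ℝ χ x (e i)) :=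
    fun i => (contDiff_du (chi_smooth R) (e i)).continuous
  have hDcont : ∀ i : Fin n, Continuous (D i) := fun i => (contDiff_du hsm (e i)).continuous
  have hgwcont : Continuous (gw n) := by
    have : Continuous (fun x : EuclideanSpace ℝ (Fin n) => -‖x‖^2/4) :=
      ((continuous_norm.pow 2).neg).div_const 4
    exact Real.continuous_exp.comp this
  -- integrability
  have hPint : Integrable P := by
    apply Continuous.integrable_of_hasCompactSupport
    · exact continuous_finset_sum _ fun i _ =>
        ((continuous_const.mul ((hccont.mul (hDcont i)).pow 2)).mul hgwcont)
    · apply HasCompactSupport.intro (isCompact_closedBall (0 : EuclideanSpace ℝ (Fin n)) (2*R))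
      intro x hx
      simp only [mem_closedBall, dist_zero_right, not_le] at hx
      rw [hPdef]
      simp only
      apply Finset.sum_eq_zero
      intro i _
      rw [show χ x = 0 from chi_zero hR hx.le]
      ring
  have hQint : Integrable Q := by
    apply Continuous.integrable_of_hasCompactSupport
    · exact continuous_finset_sum _ fun i _ =>
        ((continuous_const.mul (((hsm.continuous).mul (hdχcont i)).pow 2)).mul hgwcont)
    · apply HasCompactSupport.intro (isCompact_closedBall (0 : EuclideanSpace ℝ (Fin n)) (2*R))
      intro x hx
      simp only [mem_closedBall, dist_zero_right, not_le] at hx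
      rw [hQdef]
      simp only
      apply Finset.sum_eq_zero
      intro i _
      rw [show fderiv ℝ χ x = 0 from chi_deriv_zero_gt hR hx]
      simp
  have hGint : Integrable G := by
    apply integrable_finset_sum
    intro i _
    apply Continuous.integrable_of_hasCompactSupport
    · exact ((contDiff_du hφsm (e i)).continuous).mul (hgwcont.mul (hDcont i))
    · exact (hcs_du hφcs (e i)).mul_right
  -- ∫ P ≤ ∫ Q
  have hPle : ∫ x, P x ≤ ∫ x, Q x := by
    calc ∫ x, P x ≤ ∫ x, (G x + Q x) := integral_mono hPint (hGint.add hQint) hPQ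
      _ = (∫ x, G x) + ∫ x, Q x := integral_add hGint hQint
      _ = ∫ x, Q x := by rw [hibp]; ring
  -- ∫_{ball r} F ≤ 2 ∫ P
  have hFP : ∀ x ∈ ball (0 : EuclideanSpace ℝ (Fin n)) r,
      (∑ i, (D i x)^2) * gw n x = 2 * P x := by
    intro x hx
    rw [mem_ball, dist_zero_right] at hx
    have hχ1 : χ x = 1 := chi_one hR (le_trans hx.le hrR)
    rw [hPdef]
    simp only
    rw [Finset.sum_mul, Finset.mul_sum]
    exact Finset.sum_congr rfl fun i _ => by rw [hχ1]; ring
  have hS2P : ∫ x in ball (0 : EuclideanSpace ℝ (Fin n)) r, (∑ i, (D i x)^2) * gw n x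
      ≤ 2 * ∫ x, P x := by
    rw [setIntegral_congr_fun measurableSet_ball hFP, MeasureTheory.integral_const_mul]
    have h1 : ∫ x in ball (0 : EuclideanSpace ℝ (Fin n)) r, P x ≤ ∫ x, P x :=
      setIntegral_le_integral hPint (ae_of_all _ hPnonneg)
    linarith
  -- ∫ Q ≤ M * vol
  set M : ℝ := (n:ℝ) * (2*(C*(1+2*R)^m)^2*K^2*Real.exp (-(R^2)/4)) with hMdef
  have hM0 : 0 ≤ M := by positivity
  have hQzero : ∀ x : EuclideanSpace ℝ (Fin n), fderiv ℝ χ x = 0 → Q x = 0 := by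
    intro x h0
    rw [hQdef]
    simp only
    apply Finset.sum_eq_zero
    intro i _
    rw [h0]
    simp
  have hQle : ∀ x, Q x ≤ Set.indicator (closedBall (0 : EuclideanSpace ℝ (Fin n)) (2*R))
      (fun _ => M) x := by
    intro x
    by_cases hmem : x ∈ closedBall (0 : EuclideanSpace ℝ (Fin n)) (2*R)
    · rw [Set.indicator_of_mem hmem]
      rw [mem_closedBall, dist_zero_right] at hmem
      by_cases hlt : ‖x‖ < R
      · rw [hQzero x (chi_deriv_zero_lt hR hlt)]; exact hM0
      · push_neg at hlt
        rw [hQdef, hMdef]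
        simp only
        have hbound : ∀ i : Fin n, 2 * (u x * fderiv ℝ χ x (e i))^2 * gw n x
            ≤ 2*(C*(1+2*R)^m)^2*K^2*Real.exp (-(R^2)/4) := by
          intro i
          have hu2 : (u x)^2 ≤ (C*(1+2*R)^m)^2 := by
            have h1 : |u x| ≤ C*(1+2*R)^m := by
              refine le_trans (hpb x) ?_
              apply mul_le_mul_of_nonneg_left _ hC0
              exact pow_le_pow_left₀ (by positivity) (by linarith) m
            calc (u x)^2 = |u x|^2 := (sq_abs _).symm
              _ ≤ (C*(1+2*R)^m)^2 := pow_le_pow_left₀ (abs_nonneg _) h1 2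
          have hdχ2 : (fderiv ℝ χ x (e i))^2 ≤ K^2 := by
            have h2 : |fderiv ℝ χ x (e i)| ≤ K := by
              rw [show fderiv ℝ χ x = R⁻¹ • fderiv ℝ (⇑(bump n)) (R⁻¹ • x) from
                (hasFDerivAt_chi hR x).fderiv]
              simp only [ContinuousLinearMap.coe_smul', Pi.smul_apply, smul_eq_mul]
              rw [abs_mul]
              have hei : ‖e i‖ = 1 := by
                rw [he]; simp [EuclideanSpace.norm_single]
              have h3 : |fderiv ℝ (⇑(bump n)) (R⁻¹ • x) (e i)| ≤ K := by
                calc |fderiv ℝ (⇑(bump n)) (R⁻¹ • x) (e i)|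
                    ≤ ‖fderiv ℝ (⇑(bump n)) (R⁻¹ • x)‖ * ‖e i‖ :=
                      (fderiv ℝ (⇑(bump n)) (R⁻¹ • x)).le_opNorm (e i)
                  _ = ‖fderiv ℝ (⇑(bump n)) (R⁻¹ • x)‖ := by rw [hei, mul_one]
                  _ ≤ K := hK _
              have hRinv : |R⁻¹| ≤ 1 := by
                rw [abs_of_pos (inv_pos.mpr hR0)]
                exact inv_le_one_of_one_le₀ hR
              nlinarith [abs_nonneg (fderiv ℝ (⇑(bump n)) (R⁻¹ • x) (e i)),
                abs_nonneg (R⁻¹ : ℝ)]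
            calc (fderiv ℝ χ x (e i))^2 = |fderiv ℝ χ x (e i)|^2 := (sq_abs _).symm
              _ ≤ K^2 := pow_le_pow_left₀ (abs_nonneg _) h2 2
          have hgw : gw n x ≤ Real.exp (-(R^2)/4) := by
            rw [gw]
            apply Real.exp_le_exp.mpr
            have : R^2 ≤ ‖x‖^2 := pow_le_pow_left₀ hR0.le hlt 2
            linarith
          have hgw0 : 0 ≤ gw n x := (gw_pos x).le
          calc 2 * (u x * fderiv ℝ χ x (e i))^2 * gw n x
              = 2 * ((u x)^2 * (fderiv ℝ χ x (e i))^2) * gw n x := by ring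
            _ ≤ 2 * ((C*(1+2*R)^m)^2 * K^2) * Real.exp (-(R^2)/4) := by
                have hb1 : (0:ℝ) ≤ (u x)^2 := sq_nonneg _
                have hb2 : (0:ℝ) ≤ (fderiv ℝ χ x (e i))^2 := sq_nonneg _
                have hb3 : (0:ℝ) ≤ (C*(1+2*R)^m)^2 := sq_nonneg _
                have hb4 : (0:ℝ) ≤ K^2 := sq_nonneg _
                have hp : (u x)^2 * (fderiv ℝ χ x (e i))^2 ≤ (C*(1+2*R)^m)^2 * K^2 :=
                  mul_le_mul hu2 hdχ2 hb2 hb3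
                have := mul_le_mul (mul_le_mul_of_nonneg_left hp (by norm_num : (0:ℝ) ≤ 2))
                  hgw hgw0 (by positivity)
                linarith
            _ = 2*(C*(1+2*R)^m)^2*K^2*Real.exp (-(R^2)/4) := by ring
        calc (∑ i, 2 * (u x * fderiv ℝ χ x (e i))^2 * gw n x)
            ≤ ∑ _i : Fin n, 2*(C*(1+2*R)^m)^2*K^2*Real.exp (-(R^2)/4) :=
              Finset.sum_le_sum (fun i _ => hbound i)
          _ = (n:ℝ) * (2*(C*(1+2*R)^m)^2*K^2*Real.exp (-(R^2)/4)) := by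
              rw [Finset.sum_const, Finset.card_univ, Fintype.card_fin, nsmul_eq_mul]
    · rw [Set.indicator_of_notMem hmem]
      rw [mem_closedBall, dist_zero_right, not_le] at hmem
      rw [hQzero x (chi_deriv_zero_gt hR hmem)]
  have hindint : Integrable (Set.indicator (closedBall (0 : EuclideanSpace ℝ (Fin n)) (2*R))
      (fun _ => M)) := by
    rw [integrable_indicator_iff measurableSet_closedBall]
    exact (integrableOn_const_iff (C := M)).mpr (Or.inr measure_closedBall_lt_top)
  have hQM : ∫ x, Q x ≤ M * (volume (closedBall (0 : EuclideanSpace ℝ (Fin n)) (2*R))).toReal := by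
    calc ∫ x, Q x
        ≤ ∫ x, Set.indicator (closedBall (0 : EuclideanSpace ℝ (Fin n)) (2*R)) (fun _ => M) x :=
          integral_mono hQint hindint hQle
      _ = M * (volume (closedBall (0 : EuclideanSpace ℝ (Fin n)) (2*R))).toReal := by
          rw [integral_indicator_const _ measurableSet_closedBall, smul_eq_mul, mul_comm, measureReal_def]
  have hvol0 : 0 ≤ (volume (closedBall (0 : EuclideanSpace ℝ (Fin n)) (2*R))).toReal :=
    ENNReal.toReal_nonneg
  calc ∫ x in ball (0 : EuclideanSpace ℝ (Fin n)) r, (∑ i, (D i x)^2) * gw n x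
      ≤ 2 * ∫ x, P x := hS2P
    _ ≤ 2 * ∫ x, Q x := by linarith
    _ ≤ 2 * (M * (volume (closedBall (0 : EuclideanSpace ℝ (Fin n)) (2*R))).toReal) := by
        linarith
    _ = 2 * M * (volume (closedBall (0 : EuclideanSpace ℝ (Fin n)) (2*R))).toReal := by ring


end Stmt9Aux

open Stmt9Aux in
/-- Every `f`-harmonic function of polynomial growth on the Gaussian space is constant. -/
theorem stmt_9 (n : ℕ) (u : EuclideanSpace ℝ (Fin n) → ℝ) (hsm : ContDiff ℝ (⊤ : ℕ∞) u)
    (hharm : ∀ x, eLaplacian n u x - (1 / 2) * fderiv ℝ u x x = 0)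
    (hpoly : ∃ C k : ℝ, ∀ x, |u x| ≤ C * (1 + ‖x‖) ^ k) :
    ∃ c : ℝ, u = fun _ => c := by
  have hsm' : ContDiff ℝ ((⊤:ℕ∞) : WithTop ℕ∞) u := hsm.of_le (by simp)
  obtain ⟨C, k, hCk⟩ := hpoly
  -- C ≥ 0
  have hC0 : 0 ≤ C := by
    have h := hCk 0
    have h0 : ‖(0 : EuclideanSpace ℝ (Fin n))‖ = 0 := norm_zero
    rw [h0] at h
    simp only [add_zero, Real.one_rpow] at h
    calc (0:ℝ) ≤ |u 0| := abs_nonneg _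
      _ ≤ C * 1 := by simpa using h
      _ = C := mul_one C
  -- polynomial bound with natural exponent
  set m : ℕ := ⌈k⌉₊ with hm
  have hpb : ∀ x, |u x| ≤ C * (1+‖x‖)^m := by
    intro x
    refine le_trans (hCk x) ?_
    apply mul_le_mul_of_nonneg_left _ hC0
    have h1 : (1:ℝ) ≤ 1 + ‖x‖ := by linarith [norm_nonneg x]
    calc (1+‖x‖) ^ k ≤ (1+‖x‖) ^ (m:ℝ) :=
          Real.rpow_le_rpow_of_exponent_le h1 (Nat.le_ceil k)
      _ = (1+‖x‖) ^ m := Real.rpow_natCast _ m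
  -- bound on the bump gradient
  obtain ⟨K', hK'⟩ := (((bump_smooth (n := n)).fderiv_right
      inf_add_one).continuous).bounded_above_of_compact_support
      ((bump n).hasCompactSupport.fderiv ℝ)
  set K : ℝ := max K' 0 with hKdef
  have hK0 : 0 ≤ K := le_max_right _ _
  have hK : ∀ y, ‖fderiv ℝ (⇑(bump n)) y‖ ≤ K := fun y => le_trans (hK' y) (le_max_left _ _)
  -- divergence-free
  have hdiv := div_free hsm' hharm
  -- the integral ∫_{ball r} F = 0 for all r
  set V₁ : ℝ := (volume (ball (0 : EuclideanSpace ℝ (Fin n)) 1)).toReal with hV₁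
  have hV₁0 : 0 ≤ V₁ := ENNReal.toReal_nonneg
  set F : EuclideanSpace ℝ (Fin n) → ℝ :=
    fun x => (∑ i, (fderiv ℝ u x (EuclideanSpace.single i 1))^2) * gw n x with hFdef
  have hF0 : ∀ x, 0 ≤ F x := by
    intro x
    apply mul_nonneg (Finset.sum_nonneg fun i _ => sq_nonneg _) (gw_pos x).le
  have hvol : ∀ R : ℝ, 0 < R →
      (volume (closedBall (0 : EuclideanSpace ℝ (Fin n)) (2*R))).toReal = (2*R)^n * V₁ := by
    intro R hR0
    rw [Measure.addHaar_closedBall _ _ (by linarith : (0:ℝ) ≤ 2*R)]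
    rw [ENNReal.toReal_mul, ENNReal.toReal_ofReal (by positivity)]
    congr 2
    exact finrank_euclideanSpace_fin
  set J : ℝ → ℝ := fun R => 2 * ((n:ℝ) * (2*(C*(1+2*R)^m)^2*K^2*Real.exp (-(R^2)/4)))
      * ((2*R)^n * V₁) with hJ
  have hJ0 : ∀ R : ℝ, 0 < R → 0 ≤ J R := by
    intro R hR0
    rw [hJ]
    positivity
  set c₁ : ℝ := 2 * ((n:ℝ) * (2*(C*3^m)^2*K^2)) * (2^n * V₁) with hc₁
  have hJle : ∀ᶠ R in atTop, J R ≤ c₁ * (R^(2*m+n) * Real.exp (-R)) := by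
    filter_upwards [eventually_ge_atTop (4:ℝ)] with R h4
    have hR0 : (0:ℝ) < R := by linarith
    have e2 : Real.exp (-(R^2)/4) ≤ Real.exp (-R) := by
      apply Real.exp_le_exp.mpr
      nlinarith
    rw [hJ, hc₁]
    calc 2 * ((n:ℝ) * (2*(C*(1+2*R)^m)^2*K^2*Real.exp (-(R^2)/4))) * ((2*R)^n * V₁)
        ≤ 2 * ((n:ℝ) * (2*(C*(3*R)^m)^2*K^2*Real.exp (-R))) * ((2*R)^n * V₁) := by
          gcongr
          · linarith
      _ = 2 * ((n:ℝ) * (2*(C*3^m)^2*K^2)) * (2^n * V₁) * (R^(2*m+n) * Real.exp (-R)) := by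
          rw [pow_add]
          ring
  have hJtend : Tendsto J atTop (𝓝 0) := by
    have hbt : Tendsto (fun R : ℝ => c₁ * (R^(2*m+n) * Real.exp (-R))) atTop (𝓝 0) := by
      have := (Real.tendsto_pow_mul_exp_neg_atTop_nhds_zero (2*m+n)).const_mul c₁
      simpa using this
    apply squeeze_zero' ?_ hJle hbt
    filter_upwards [eventually_gt_atTop (0:ℝ)] with R hR0
    exact hJ0 R hR0
  -- F is continuous and integrable on balls
  have hgwcont : Continuous (gw n) := by
    have : Continuous (fun x : EuclideanSpace ℝ (Fin n) => -‖x‖^2/4) :=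
      ((continuous_norm.pow 2).neg).div_const 4
    exact Real.continuous_exp.comp this
  have hFcont : Continuous F := by
    rw [hFdef]
    exact (continuous_finset_sum _ fun i _ =>
      ((contDiff_du hsm' _).continuous.pow 2)).mul hgwcont
  have hFint : ∀ r : ℝ, IntegrableOn F (ball (0 : EuclideanSpace ℝ (Fin n)) r) := by
    intro r
    exact (hFcont.continuousOn.integrableOn_compact (isCompact_closedBall _ _)).mono_set
      ball_subset_closedBall
  -- ∫ F over balls is zero
  have hSzero : ∀ r : ℝ, ∫ x in ball (0 : EuclideanSpace ℝ (Fin n)) r, F x = 0 := by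
    intro r
    have hmono : ∀ᶠ R in atTop, ∫ x in ball (0 : EuclideanSpace ℝ (Fin n)) r, F x ≤ J R := by
      filter_upwards [eventually_ge_atTop (1:ℝ), eventually_ge_atTop r] with R h1 h2
      have hc := cacc hsm' hdiv hC0 hpb hK0 hK h1 h2
      rw [hvol R (by linarith)] at hc
      rw [hJ]
      exact hc
    have h0le : 0 ≤ ∫ x in ball (0 : EuclideanSpace ℝ (Fin n)) r, F x :=
      setIntegral_nonneg measurableSet_ball (fun x _ => hF0 x)
    have hle0 : ∫ x in ball (0 : EuclideanSpace ℝ (Fin n)) r, F x ≤ 0 :=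
      ge_of_tendsto hJtend hmono
    linarith
  -- F vanishes identically
  have hFzero : ∀ x, F x = 0 := by
    intro x₀
    by_contra hne
    have hpos : 0 < F x₀ := lt_of_le_of_ne (hF0 x₀) (Ne.symm hne)
    have hcont : ContinuousAt F x₀ := hFcont.continuousAt
    have hev : ∀ᶠ y in 𝓝 x₀, F x₀ / 2 < F y :=
      hcont.eventually (eventually_gt_nhds (half_lt_self hpos))
    rw [Metric.eventually_nhds_iff] at hev
    obtain ⟨ε, hε0, hball⟩ := hev
    set δ : ℝ := min ε 1 with hδdef
    have hδ0 : 0 < δ := lt_min hε0 one_pos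
    have hδε : δ ≤ ε := min_le_left _ _
    have hδ1 : δ ≤ 1 := min_le_right _ _
    set r : ℝ := ‖x₀‖ + 2 with hrdef
    have hsub : ball x₀ δ ⊆ ball (0 : EuclideanSpace ℝ (Fin n)) r := by
      intro y hy
      rw [mem_ball] at hy ⊢
      calc dist y 0 ≤ dist y x₀ + dist x₀ 0 := dist_triangle _ _ _
        _ < δ + ‖x₀‖ := by rw [dist_zero_right]; linarith
        _ ≤ r := by rw [hrdef]; linarith
    have hIball : ∫ x in ball x₀ δ, F x ≤ ∫ x in ball (0 : EuclideanSpace ℝ (Fin n)) r, F x := by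
      apply setIntegral_mono_set (hFint r) (ae_of_all _ hF0)
      exact HasSubset.Subset.eventuallyLE hsub
    have hlower : F x₀/2 * (volume (ball x₀ δ)).toReal ≤ ∫ x in ball x₀ δ, F x := by
      apply setIntegral_ge_of_const_le_real measurableSet_ball measure_ball_lt_top.ne
      · intro y hy
        rw [mem_ball] at hy
        exact (hball (lt_of_lt_of_le hy hδε)).le
      · exact (hFint r).mono_set hsub
    have hμpos : 0 < (volume (ball x₀ δ)).toReal :=
      ENNReal.toReal_pos (measure_ball_pos _ _ hδ0).ne' measure_ball_lt_top.ne
    nlinarith [hSzero r]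
  -- ∇u = 0 everywhere
  have hD0 : ∀ (x : EuclideanSpace ℝ (Fin n)) (i : Fin n),
      fderiv ℝ u x (EuclideanSpace.single i 1) = 0 := by
    intro x i
    have h := hFzero x
    rw [hFdef] at h
    simp only at h
    have hg := gw_pos (n := n) x
    have hsum : (∑ j, (fderiv ℝ u x (EuclideanSpace.single j 1))^2) = 0 := by
      rcases mul_eq_zero.mp h with h'|h'
      · exact h'
      · exact absurd h' hg.ne'
    have h2 := (Finset.sum_eq_zero_iff_of_nonneg (fun j _ => sq_nonneg _)).mp hsum i
      (Finset.mem_univ i)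
    exact pow_eq_zero_iff two_ne_zero |>.mp h2
  have hfd : ∀ x, fderiv ℝ u x = 0 := by
    intro x
    apply ContinuousLinearMap.ext
    intro v
    rw [clm_apply_eq_sum (fderiv ℝ u x) v]
    simp [hD0]
  refine ⟨u 0, funext fun x => ?_⟩
  exact is_const_of_fderiv_eq_zero (hsm.differentiable (by simp)) hfd x 0
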